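/- arXiv:2105.03718 — 6 statements merged into one kernel-verified Lean document; each statement's English description precedes it below -/
import Mathlib

section
/- Any two multimaximal couplings of a finite family of binary random variables X₁,…,Xₙ have the same joint distribution. Concretely: if q and q′ are probability distributions on {0,1}ⁿ with equal marginals Pr[Yᵢ=1] = pᵢ and such that under both, Pr[Yᵢ=1, Yⱼ=1] = min(pᵢ,pⱼ) for all i,j, then q = q′. -/
open Finset

noncomputable def fA {n : ℕ} (p : Fin n → ℝ) (y : Fin n → Bool) : ℝ :=
  (insert (1:ℝ) ((univ.filter fun i => y i = true).image p)).min' (insert_nonempty _ _)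

noncomputable def fB {n : ℕ} (p : Fin n → ℝ) (y : Fin n → Bool) : ℝ :=
  (insert (0:ℝ) ((univ.filter fun i => y i = false).image p)).max' (insert_nonempty _ _)

lemma nest {n : ℕ} (p : Fin n → ℝ) (q : (Fin n → Bool) → ℝ)
    (hq : ∀ y, 0 ≤ q y)
    (hm : ∀ i : Fin n, (∑ y, if y i = true then q y else 0) = p i)
    (hmax : ∀ i j : Fin n,
      (∑ y, if y i = true ∧ y j = true then q y else 0) = min (p i) (p j))
    {i j : Fin n} (hij : p i ≤ p j) {y : Fin n → Bool}
    (hi : y i = true) (hj : y j = false) : q y = 0 := by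
  have h0 : (∑ z, if z i = true ∧ z j = false then q z else 0) = 0 := by
    have h1 := hm i
    have h2 := hmax i j
    rw [min_eq_left hij] at h2
    have hs : (∑ z, if z i = true then q z else 0)
        = (∑ z, if z i = true ∧ z j = true then q z else 0)
          + (∑ z, if z i = true ∧ z j = false then q z else 0) := by
      rw [← Finset.sum_add_distrib]
      refine Finset.sum_congr rfl fun z _ => ?_
      cases hzi : z i <;> cases hzj : z j <;> simp
    linarith
  have := (Finset.sum_eq_zero_iff_of_nonneg
      (fun z _ => by split <;> simp [hq z])).mp h0 y (mem_univ y)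
  simpa [hi, hj] using this

lemma key {n : ℕ} (p : Fin n → ℝ) (q : (Fin n → Bool) → ℝ)
    (hq : ∀ y, 0 ≤ q y) (hsum : (∑ y, q y) = 1)
    (hm : ∀ i : Fin n, (∑ y, if y i = true then q y else 0) = p i)
    (hmax : ∀ i j : Fin n,
      (∑ y, if y i = true ∧ y j = true then q y else 0) = min (p i) (p j))
    (y₀ : Fin n → Bool) :
    q y₀ = if (∀ i j : Fin n, y₀ i = true → y₀ j = false → p j < p i)
      then fA p y₀ - fB p y₀ else 0 := by
  have hp0 : ∀ i, 0 ≤ p i := by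
    intro i; rw [← hm i]
    exact Finset.sum_nonneg fun z _ => by split <;> simp [hq z]
  have hp1 : ∀ i, p i ≤ 1 := by
    intro i; rw [← hm i, ← hsum]
    exact Finset.sum_le_sum fun z _ => by split <;> simp [hq z]
  split
  case isFalse hval =>
    push_neg at hval
    obtain ⟨i, j, hi, hj, hij⟩ := hval
    exact nest p q hq hm hmax hij hi (by simpa using hj)
  case isTrue hval =>
    -- M : probability that all coordinates in the support of y₀ are 1
    set M : ℝ := ∑ y, if (∀ i, y₀ i = true → y i = true) then q y else 0 with hM
    set N : ℝ := ∑ y, if (∀ i, y₀ i = true → y i = true) ∧ (∃ j, y₀ j = false ∧ y j = true)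
        then q y else 0 with hN
    have hsplit : M = q y₀ + N := by
      have : M = ∑ y, ((if y = y₀ then q y else 0)
          + (if (∀ i, y₀ i = true → y i = true) ∧ (∃ j, y₀ j = false ∧ y j = true)
              then q y else 0)) := by
        refine Finset.sum_congr rfl fun y _ => ?_
        by_cases hy : y = y₀
        · subst hy
          have hP : ∀ i, y i = true → y i = true := fun i h => h
          have hE : ¬ (∃ j, y j = false ∧ y j = true) := by
            rintro ⟨j, hj1, hj2⟩; rw [hj1] at hj2; exact Bool.false_ne_true hj2
          simp [hP, hE]
        · rw [if_neg hy]
          by_cases hP : ∀ i, y₀ i = true → y i = true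
          · have hE : ∃ j, y₀ j = false ∧ y j = true := by
              have : ∃ j, y j ≠ y₀ j := by
                by_contra h; push_neg at h; exact hy (funext h)
              obtain ⟨j, hj⟩ := this
              cases h0 : y₀ j with
              | true => exact absurd (hP j h0) (by rw [h0] at hj; exact hj)
              | false =>
                refine ⟨j, h0, ?_⟩
                rw [h0] at hj
                cases hyj : y j with
                | false => exact absurd hyj hj
                | true => rfl
            simp [hP, hE]
          · simp [hP]
      rw [this, Finset.sum_add_distrib, Finset.sum_ite_eq' univ y₀ q, if_pos (mem_univ y₀)]
    have hMeq : M = fA p y₀ := by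
      by_cases hS : ∃ i, y₀ i = true
      · have hSne : (univ.filter fun i => y₀ i = true).Nonempty := by
          obtain ⟨i, hi⟩ := hS
          exact ⟨i, by simp [hi]⟩
        obtain ⟨i₀, hi₀mem, hi₀min⟩ := Finset.exists_min_image _ p hSne
        have hi₀ : y₀ i₀ = true := (Finset.mem_filter.mp hi₀mem).2
        have hfA : fA p y₀ = p i₀ := by
          apply le_antisymm
          · exact Finset.min'_le _ _ (Finset.mem_insert_of_mem
              (Finset.mem_image_of_mem p hi₀mem))
          · apply Finset.le_min'
            intro b hb
            rcases Finset.mem_insert.mp hb with hb | hb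
            · rw [hb]; exact hp1 i₀
            · obtain ⟨i, hi, rfl⟩ := Finset.mem_image.mp hb
              exact hi₀min i hi
        have hdiff : ∑ y, ((if y i₀ = true then q y else 0)
            - (if (∀ i, y₀ i = true → y i = true) then q y else 0)) = 0 := by
          refine Finset.sum_eq_zero fun y _ => ?_
          by_cases hP : ∀ i, y₀ i = true → y i = true
          · rw [if_pos hP, if_pos (hP i₀ hi₀), sub_self]
          · rw [if_neg hP]
            push_neg at hP
            obtain ⟨i, hi1, hi2⟩ := hP
            by_cases hyi : y i₀ = true
            · have hq0 : q y = 0 := by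
                refine nest p q hq hm hmax ?_ hyi (by simpa using hi2)
                exact hi₀min i (by simp [hi1])
              rw [if_pos hyi, hq0, sub_zero]
            · rw [if_neg hyi, sub_zero]
        rw [Finset.sum_sub_distrib] at hdiff
        have := hm i₀
        rw [hfA]
        linarith
      · push_neg at hS
        have hM1 : M = 1 := by
          rw [hM, ← hsum]
          refine Finset.sum_congr rfl fun y _ => ?_
          rw [if_pos (fun i h => absurd h (hS i))]
        have hfilt : (univ.filter fun i => y₀ i = true) = ∅ := by
          refine Finset.filter_eq_empty_iff.mpr fun i _ => hS i
        rw [hM1, fA]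
        simp [hfilt]
    have hNeq : N = fB p y₀ := by
      by_cases hS : ∃ j, y₀ j = false
      · have hSne : (univ.filter fun j => y₀ j = false).Nonempty := by
          obtain ⟨j, hj⟩ := hS
          exact ⟨j, by simp [hj]⟩
        obtain ⟨j₀, hj₀mem, hj₀max⟩ := Finset.exists_max_image _ p hSne
        have hj₀ : y₀ j₀ = false := (Finset.mem_filter.mp hj₀mem).2
        have hfB : fB p y₀ = p j₀ := by
          apply le_antisymm
          · apply Finset.max'_le
            intro b hb
            rcases Finset.mem_insert.mp hb with hb | hb
            · rw [hb]; exact hp0 j₀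
            · obtain ⟨j, hj, rfl⟩ := Finset.mem_image.mp hb
              exact hj₀max j hj
          · exact Finset.le_max' _ _ (Finset.mem_insert_of_mem
              (Finset.mem_image_of_mem p hj₀mem))
        have hdiff : ∑ y, ((if y j₀ = true then q y else 0)
            - (if (∀ i, y₀ i = true → y i = true) ∧ (∃ j, y₀ j = false ∧ y j = true)
                then q y else 0)) = 0 := by
          refine Finset.sum_eq_zero fun y _ => ?_
          by_cases hyj : y j₀ = true
          · by_cases hP : ∀ i, y₀ i = true → y i = true
            · rw [if_pos hyj, if_pos ⟨hP, ⟨j₀, hj₀, hyj⟩⟩, sub_self]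
            · push_neg at hP
              obtain ⟨i, hi1, hi2⟩ := hP
              have hq0 : q y = 0 := by
                refine nest p q hq hm hmax ?_ hyj (by simpa using hi2)
                exact le_of_lt (hval i j₀ hi1 hj₀)
              have hQ : ¬ ((∀ i, y₀ i = true → y i = true) ∧ (∃ j, y₀ j = false ∧ y j = true)) := by
                rintro ⟨hP', _⟩; exact hi2 (hP' i hi1)
              rw [if_pos hyj, if_neg hQ, hq0, sub_zero]
          · rw [if_neg hyj]
            by_cases hQ : (∀ i, y₀ i = true → y i = true) ∧ (∃ j, y₀ j = false ∧ y j = true)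
            · obtain ⟨hP, j, hj1, hj2⟩ := hQ
              have hq0 : q y = 0 := by
                refine nest p q hq hm hmax ?_ hj2 (by simpa using hyj)
                exact hj₀max j (by simp [hj1])
              rw [if_pos ⟨hP, ⟨j, hj1, hj2⟩⟩, hq0]
              simp
            · rw [if_neg hQ, sub_zero]
        rw [Finset.sum_sub_distrib] at hdiff
        have := hm j₀
        rw [hfB]
        linarith
      · push_neg at hS
        have hN0 : N = 0 := by
          rw [hN]
          refine Finset.sum_eq_zero fun y _ => ?_
          rw [if_neg]
          rintro ⟨_, j, hj1, _⟩
          exact (hS j) hj1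
        have hfilt : (univ.filter fun j => y₀ j = false) = ∅ := by
          refine Finset.filter_eq_empty_iff.mpr fun j _ => hS j
        rw [hN0, fB]
        simp [hfilt]
    rw [← hMeq, ← hNeq]
    linarith

theorem stmt_5 (n : ℕ) (p : Fin n → ℝ) (q q' : (Fin n → Bool) → ℝ)
    (hq : ∀ y, 0 ≤ q y) (hsum : (∑ y, q y) = 1)
    (hq' : ∀ y, 0 ≤ q' y) (hsum' : (∑ y, q' y) = 1)
    (hm : ∀ i : Fin n, (∑ y, if y i = true then q y else 0) = p i)
    (hm' : ∀ i : Fin n, (∑ y, if y i = true then q' y else 0) = p i)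
    (hmax : ∀ i j : Fin n,
      (∑ y, if y i = true ∧ y j = true then q y else 0) = min (p i) (p j))
    (hmax' : ∀ i j : Fin n,
      (∑ y, if y i = true ∧ y j = true then q' y else 0) = min (p i) (p j)) :
    q = q' := by
  funext y
  rw [key p q hq hsum hm hmax y, key p q' hq' hsum' hm' hmax' y]
end

section
/- Let q be a multimaximal coupling on {0,1}ⁿ of binary variables with success probabilities p₁ ≥ p₂ ≥ ⋯ ≥ pₙ. Then q is supported on the n+1 'staircase' points (0,…,0), (1,0,…,0), (1,1,0,…,0), …, (1,…,1), with q(1,…,1,0,…,0) (k ones) = p_k − p_{k+1} for k = 0, …, n, where p₀ := 1 and p_{n+1} := 0, so that q(0,…,0) = 1 − p₁ and q(1,…,1) = pₙ. -/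
open Finset

/-- The "staircase" point of `{0,1}ⁿ` with `k` leading ones. -/
def stair (n k : ℕ) : Fin n → Bool := fun i => decide (i.val < k)

/-- Extended sequence of probabilities: `pe p 0 = 1`, `pe p (k+1) = p k` for `k < n`,
and `0` beyond. -/
def pe {n : ℕ} (p : Fin n → ℝ) (k : ℕ) : ℝ :=
  if k = 0 then 1 else if h : k - 1 < n then p ⟨k - 1, h⟩ else 0

theorem stmt_6 (n : ℕ) (p : Fin n → ℝ)
    (hp0 : ∀ i, 0 ≤ p i) (hp1 : ∀ i, p i ≤ 1)
    (hmono : ∀ i j : Fin n, i ≤ j → p j ≤ p i)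
    (q : (Fin n → Bool) → ℝ)
    (hq : ∀ y, 0 ≤ q y) (hsum : (∑ y, q y) = 1)
    (hm : ∀ i : Fin n, (∑ y, if y i = true then q y else 0) = p i)
    (hmax : ∀ i j : Fin n,
      (∑ y, if y i = true ∧ y j = true then q y else 0) = min (p i) (p j)) :
    (∀ y : Fin n → Bool, (∀ k, k ≤ n → y ≠ stair n k) → q y = 0) ∧
    (∀ k, k ≤ n → q (stair n k) = pe p k - pe p (k + 1)) := by
  -- Key monotonicity lemma: if `i ≤ j` and `y j = true`, `y i = false`, then `q y = 0`.
  have key : ∀ i j : Fin n, i ≤ j → ∀ y : Fin n → Bool,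
      y j = true → y i = false → q y = 0 := by
    intro i j hij
    have hzero : (∑ y, if y j = true ∧ y i = false then q y else 0) = 0 := by
      have hpt : ∀ y : Fin n → Bool,
          (if y j = true ∧ y i = false then q y else 0)
            = (if y j = true then q y else 0)
              - (if y i = true ∧ y j = true then q y else 0) := by
        intro y
        cases hyi : y i <;> cases hyj : y j <;> simp [hyi, hyj]
      rw [Finset.sum_congr rfl (fun y _ => hpt y), Finset.sum_sub_distrib, hm j, hmax i j,
        min_eq_right (hmono i j hij), sub_self]
    intro y hyj hyi
    have := (Finset.sum_eq_zero_iff_of_nonneg (fun y _ => by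
      by_cases h : y j = true ∧ y i = false <;> simp [h, hq y])).mp hzero y (Finset.mem_univ y)
    simpa [hyj, hyi] using this
  have support : ∀ y : Fin n → Bool, (∀ k, k ≤ n → y ≠ stair n k) → q y = 0 := by
    intro y hy
    by_contra hqy
    -- then y is monotone
    have hmono' : ∀ i j : Fin n, i ≤ j → y j = true → y i = true := by
      intro i j hij hyj
      by_contra hyi
      exact hqy (key i j hij y hyj (by simpa using hyi))
    -- y is a staircase point
    by_cases hall : ∀ i : Fin n, y i = true
    · exact hy n le_rfl (funext fun i => by simp [stair, i.isLt, hall i])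
    · push_neg at hall
      obtain ⟨i₀, hi₀⟩ := hall
      set s : Finset (Fin n) := Finset.univ.filter (fun i => y i = false) with hs
      have hne : s.Nonempty := ⟨i₀, by simp [hs, Bool.eq_false_iff.mpr hi₀]⟩
      set m := s.min' hne with hm'
      have hym : y m = false := by
        have := s.min'_mem hne
        simpa [hs] using this
      refine hy m.val (le_of_lt m.isLt) (funext fun i => ?_)
      simp only [stair]
      by_cases hlt : i.val < m.val
      · have : y i = true := by
          by_contra h
          have hmem : i ∈ s := by simp [hs, Bool.eq_false_iff.mpr h]
          exact absurd (s.min'_le i hmem) (not_le.mpr (Fin.lt_def.mpr hlt))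
        simp [this, hlt]
      · have hle : m ≤ i := by
          simp only [Fin.le_def]; omega
        have : y i = false := by
          by_contra h
          have := hmono' m i hle (by simpa using h)
          rw [this] at hym; exact Bool.noConfusion hym
        simp [this, hlt]
  refine ⟨support, ?_⟩
  -- injectivity of stair on [0, n]
  have hinj : ∀ k₁ ∈ Finset.Icc 0 n, ∀ k₂ ∈ Finset.Icc 0 n,
      stair n k₁ = stair n k₂ → k₁ = k₂ := by
    intro k₁ h₁ k₂ h₂ heq
    simp only [Finset.mem_Icc] at h₁ h₂
    by_contra hne
    rcases Nat.lt_or_gt_of_ne hne with h | h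
    · have hk₁n : k₁ < n := lt_of_lt_of_le h h₂.2
      have := congrFun heq ⟨k₁, hk₁n⟩
      simp [stair, h] at this
    · have hk₂n : k₂ < n := lt_of_lt_of_le h h₁.2
      have := congrFun heq ⟨k₂, hk₂n⟩
      simp [stair, h] at this
  set S : Finset (Fin n → Bool) := (Finset.Icc 0 n).image (stair n) with hS
  have hmemS : ∀ y, y ∉ S → q y = 0 := by
    intro y hy
    refine support y fun k hk hkeq => hy ?_
    exact Finset.mem_image.mpr ⟨k, Finset.mem_Icc.mpr ⟨Nat.zero_le _, hk⟩, hkeq.symm⟩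
  set T : ℕ → ℝ := fun k => ∑ j ∈ Finset.Icc k n, q (stair n j) with hT
  have hT0 : T 0 = 1 := by
    have h1 : ∑ y ∈ S, q y = ∑ y, q y :=
      Finset.sum_subset (Finset.subset_univ S) (fun y _ hy => hmemS y hy)
    have h2 : ∑ y ∈ S, q y = ∑ j ∈ Finset.Icc 0 n, q (stair n j) :=
      Finset.sum_image hinj
    rw [hT]
    simp only
    rw [← h2, h1, hsum]
  have hTm : ∀ k (hk1 : 1 ≤ k) (hkn : k ≤ n), T k = p ⟨k - 1, by omega⟩ := by
    intro k hk1 hkn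
    have i : Fin n := ⟨k - 1, by omega⟩
    have h1 : ∑ y ∈ S, (if y ⟨k - 1, by omega⟩ = true then q y else 0)
        = ∑ y, (if y ⟨k - 1, by omega⟩ = true then q y else 0) :=
      Finset.sum_subset (Finset.subset_univ S)
        (fun y _ hy => by rw [hmemS y hy]; simp)
    have h2 : ∑ y ∈ S, (if y ⟨k - 1, by omega⟩ = true then q y else 0)
        = ∑ j ∈ Finset.Icc 0 n,
            (if stair n j ⟨k - 1, by omega⟩ = true then q (stair n j) else 0) :=
      Finset.sum_image hinj
    have h3 : ∀ j, (if stair n j ⟨k - 1, by omega⟩ = true then q (stair n j) else 0)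
        = (if k - 1 < j then q (stair n j) else 0) := by
      intro j; simp [stair]
    have h4 : (Finset.Icc 0 n).filter (fun j => k - 1 < j) = Finset.Icc k n := by
      ext j; simp; omega
    rw [hT]
    simp only
    rw [← h4, Finset.sum_filter]
    simp only [← h3]
    rw [← h2, h1, hm ⟨k - 1, by omega⟩]
  have hTn1 : T (n + 1) = 0 := by
    rw [hT]; simp only
    rw [Finset.Icc_eq_empty (by omega), Finset.sum_empty]
  have hstep : ∀ k, k ≤ n → q (stair n k) = T k - T (k + 1) := by
    intro k hk
    rw [hT]
    simp only
    rw [Finset.Icc_eq_cons_Ioc hk, Finset.sum_cons, ← Finset.Icc_add_one_left_eq_Ioc]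
    ring
  have hTpe : ∀ k, k ≤ n + 1 → T k = pe p k := by
    intro k hk
    match k with
    | 0 => rw [hT0]; simp [pe]
    | m + 1 =>
      by_cases hmn : m < n
      · rw [hTm (m + 1) (by omega) (by omega)]
        simp [pe, hmn]
      · have hm' : m = n := by omega
        subst hm'
        rw [hTn1]
        simp [pe]
  intro k hk
  rw [hstep k hk, hTpe k (by omega), hTpe (k + 1) (by omega)]
end

section
/- Let q be a distribution on {0,1}ⁿ with marginals Bernoulli(pᵢ). Then q is multimaximal if and only if for every nonempty subset S ⊆ {1,…,n}, Pr[Yᵢ = 1 for all i ∈ S] = min_{i∈S} pᵢ and Pr[Yᵢ = 0 for all i ∈ S] = 1 − max_{i∈S} pᵢ (both being the maximal possible values over all couplings). -/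
/-!
Since `Pr[Yᵢ = 1, Yⱼ = 1] ≤ Pr[Yᵢ = 1]` with equality only if `Yᵢ = 1` forces `Yⱼ = 1` almost
surely, a coupling is multimaximal exactly when every outcome of positive probability is monotone
in `p`: `pᵢ ≤ pⱼ` and `yᵢ = 1` imply `yⱼ = 1`. On such outcomes `∀ i ∈ S, yᵢ = 1` reduces to the
event for a minimiser of `p` on `S`, and `∀ i ∈ S, yᵢ = 0` to the event for a maximiser.
The converse is the case `S = {i, j}`.
-/

open Finset

section Support

variable {Ω : Type*} [Fintype Ω] {q : Ω → ℝ} {P Q : Ω → Prop} [DecidablePred P] [DecidablePred Q]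

theorem sum_ite_congr_of_support (h : ∀ y, q y ≠ 0 → (P y ↔ Q y)) :
    (∑ y, if P y then q y else 0) = ∑ y, if Q y then q y else 0 := by
  refine sum_congr rfl fun y _ => ?_
  by_cases hy : q y = 0
  · simp [hy]
  · exact if_congr (h y hy) rfl rfl

theorem imp_of_sum_ite_eq (hq : ∀ y, 0 ≤ q y) (hPQ : ∀ y, P y → Q y)
    (hsum : (∑ y, if Q y then q y else 0) = ∑ y, if P y then q y else 0)
    {y : Ω} (hy : q y ≠ 0) (hQ : Q y) : P y := by
  by_contra hP
  have hdiff_nonneg : ∀ z, 0 ≤ (if Q z then q z else 0) - (if P z then q z else 0) := by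
    intro z
    by_cases hPz : P z
    · simp [hPz, hPQ z hPz]
    · by_cases hQz : Q z <;> simp [hPz, hQz, hq z]
  have hdiff_zero := (sum_eq_zero_iff_of_nonneg fun z _ => hdiff_nonneg z).mp
    (by rw [sum_sub_distrib, hsum, sub_self]) y (mem_univ y)
  simp only [hQ, hP, if_true, if_false, sub_zero] at hdiff_zero
  exact hy hdiff_zero

end Support

section Coupling

variable {n : ℕ} {p : Fin n → ℝ} {q : (Fin n → Bool) → ℝ}

theorem sum_ite_eq_false (hsum : (∑ y, q y) = 1)
    (hm : ∀ i : Fin n, (∑ y, if y i = true then q y else 0) = p i) (j : Fin n) :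
    (∑ y, if y j = false then q y else 0) = 1 - p j := by
  rw [← hsum, ← hm j, ← sum_sub_distrib]
  refine sum_congr rfl fun y _ => ?_
  cases y j <;> simp

variable (hq : ∀ y, 0 ≤ q y) (hm : ∀ i : Fin n, (∑ y, if y i = true then q y else 0) = p i)
  (hpair : ∀ i j : Fin n,
    (∑ y, if y i = true ∧ y j = true then q y else 0) = min (p i) (p j))
include hq hm hpair

theorem true_of_true_of_le {i j : Fin n} (hij : p i ≤ p j) {y : Fin n → Bool} (hy : q y ≠ 0)
    (hi : y i = true) : y j = true :=
  (imp_of_sum_ite_eq (P := fun y => y i = true ∧ y j = true) hq (fun _ h => h.1) (by rw [hm, hpair, min_eq_left hij]) hy hi).2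

theorem false_of_false_of_le {i j : Fin n} (hij : p i ≤ p j) {y : Fin n → Bool} (hy : q y ≠ 0)
    (hj : y j = false) : y i = false := by
  by_contra hi
  simpa [hj] using true_of_true_of_le hq hm hpair hij hy (Bool.not_eq_false _ ▸ hi)

end Coupling

theorem stmt_7 (n : ℕ) (p : Fin n → ℝ) (q : (Fin n → Bool) → ℝ)
    (hq : ∀ y, 0 ≤ q y) (hsum : (∑ y, q y) = 1)
    (hm : ∀ i : Fin n, (∑ y, if y i = true then q y else 0) = p i) :
    (∀ i j : Fin n,
        (∑ y, if y i = true ∧ y j = true then q y else 0) = min (p i) (p j)) ↔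
    (∀ S : Finset (Fin n), ∀ hS : S.Nonempty,
        (∑ y, if (∀ i ∈ S, y i = true) then q y else 0) = S.inf' hS p ∧
        (∑ y, if (∀ i ∈ S, y i = false) then q y else 0) = 1 - S.sup' hS p) := by
  constructor
  · intro hpair S hS
    obtain ⟨imin, himin, hpmin⟩ := S.exists_mem_eq_inf' hS p
    obtain ⟨imax, himax, hpmax⟩ := S.exists_mem_eq_sup' hS p
    constructor
    · rw [hpmin, ← hm imin]
      exact sum_ite_congr_of_support fun y hy => ⟨fun h => h imin himin, fun h k hk =>
        true_of_true_of_le hq hm hpair (hpmin ▸ inf'_le p hk) hy h⟩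
    · rw [hpmax, ← sum_ite_eq_false hsum hm imax]
      exact sum_ite_congr_of_support fun y hy => ⟨fun h => h imax himax, fun h k hk =>
        false_of_false_of_le hq hm hpair (hpmax ▸ le_sup' p hk) hy h⟩
  · intro h i j
    calc (∑ y, if y i = true ∧ y j = true then q y else 0)
        = ∑ y, if ∀ k ∈ ({i, j} : Finset (Fin n)), y k = true then q y else 0 := by simp
      _ = ({i, j} : Finset (Fin n)).inf' (insert_nonempty i {j}) p := (h _ _).1
      _ = min (p i) (p j) := by simp
end

section
/- Let q be a probability distribution on Eⁿ where E = {1,…,k}, representing a coupling (S¹,…,Sⁿ). For a subset W ⊆ E let S_W^i denote the indicator [Sⁱ ∈ W]. Then the family {S_W^i : i ∈ {1,…,n}, W ⊆ E} fails to be pairwise maximally coupled for some W if and only if there exist indices i, i′ and points l, l′ in the support of q such that, writing x = Sⁱ(l), z = S^{i′}(l), y = Sⁱ(l′), w = S^{i′}(l′), we have x ≠ y, y ≠ w, w ≠ z, and z ≠ x. -/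
open Finset

theorem stmt_14 (n k : ℕ) (q : (Fin n → Fin k) → ℝ)
    (hq : ∀ l, 0 ≤ q l) (hsum : (∑ l, q l) = 1) :
    (¬ ∀ (W : Finset (Fin k)) (i i' : Fin n),
        (∑ l, if l i ∈ W ∧ l i' ∈ W then q l else 0)
          = min (∑ l, if l i ∈ W then q l else 0)
                (∑ l, if l i' ∈ W then q l else 0)) ↔
    (∃ (i i' : Fin n) (l l' : Fin n → Fin k), 0 < q l ∧ 0 < q l' ∧
        l i ≠ l' i ∧ l' i ≠ l' i' ∧ l' i' ≠ l i' ∧ l i' ≠ l i) := by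
  have tnn : ∀ (P : Prop) [Decidable P] (m : Fin n → Fin k),
      0 ≤ if P then q m else 0 := by
    intro P _ m; split_ifs; exacts [hq m, le_rfl]
  have key : ∀ (W : Finset (Fin k)) (i i' : Fin n),
      (∑ l, if l i ∈ W then q l else 0)
        = (∑ l, if l i ∈ W ∧ l i' ∈ W then q l else 0)
          + (∑ l, if l i ∈ W ∧ l i' ∉ W then q l else 0) := by
    intro W i i'
    rw [← Finset.sum_add_distrib]
    apply Finset.sum_congr rfl
    intro l _
    by_cases h1 : l i ∈ W <;> by_cases h2 : l i' ∈ W <;> simp [h1, h2]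
  have key' : ∀ (W : Finset (Fin k)) (i i' : Fin n),
      (∑ l, if l i' ∈ W then q l else 0)
        = (∑ l, if l i ∈ W ∧ l i' ∈ W then q l else 0)
          + (∑ l, if l i ∉ W ∧ l i' ∈ W then q l else 0) := by
    intro W i i'
    rw [← Finset.sum_add_distrib]
    apply Finset.sum_congr rfl
    intro l _
    by_cases h1 : l i ∈ W <;> by_cases h2 : l i' ∈ W <;> simp [h1, h2]
  have epos : ∀ (p : (Fin n → Fin k) → Prop) [DecidablePred p],
      0 < (∑ l, if p l then q l else 0) → ∃ l, 0 < q l ∧ p l := by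
    intro p _ hpos
    by_contra hcon
    push_neg at hcon
    have hle : (∑ l, if p l then q l else 0) ≤ 0 := by
      apply Finset.sum_nonpos
      intro l _
      split_ifs with hp
      · exact le_of_not_gt (fun hlt => hcon l hlt hp)
      · exact le_rfl
    linarith
  constructor
  · intro h
    push_neg at h
    obtain ⟨W, i, i', hne⟩ := h
    have snn1 : 0 ≤ ∑ l, if l i ∈ W ∧ l i' ∉ W then q l else 0 :=
      Finset.sum_nonneg (fun l _ => tnn _ l)
    have snn2 : 0 ≤ ∑ l, if l i ∉ W ∧ l i' ∈ W then q l else 0 :=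
      Finset.sum_nonneg (fun l _ => tnn _ l)
    have hle1 : (∑ l, if l i ∈ W ∧ l i' ∈ W then q l else 0)
        ≤ ∑ l, if l i ∈ W then q l else 0 := by rw [key W i i']; linarith
    have hle2 : (∑ l, if l i ∈ W ∧ l i' ∈ W then q l else 0)
        ≤ ∑ l, if l i' ∈ W then q l else 0 := by rw [key' W i i']; linarith
    have hlt := lt_of_le_of_ne (le_min hle1 hle2) hne
    rw [lt_min_iff] at hlt
    have hp1 : 0 < ∑ l, if l i ∈ W ∧ l i' ∉ W then q l else 0 := by
      have := key W i i'; linarith [hlt.1]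
    have hp2 : 0 < ∑ l, if l i ∉ W ∧ l i' ∈ W then q l else 0 := by
      have := key' W i i'; linarith [hlt.2]
    obtain ⟨l, hl, hlA, hlB⟩ := epos _ hp1
    obtain ⟨l', hl', hl'A, hl'B⟩ := epos _ hp2
    refine ⟨i, i', l, l', hl, hl', ?_, ?_, ?_, ?_⟩
    · exact fun e => hl'A (by rw [← e]; exact hlA)
    · exact fun e => hl'A (by rw [e]; exact hl'B)
    · exact fun e => hlB (by rw [← e]; exact hl'B)
    · exact fun e => hlB (by rw [e]; exact hlA)
  · rintro ⟨i, i', l, l', hl, hl', hxy, hyw, hwz, hzx⟩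
    intro h
    set W : Finset (Fin k) := {l i, l' i'} with hW
    have hx : l i ∈ W := by simp [hW]
    have hw : l' i' ∈ W := by simp [hW]
    have hy : l' i ∉ W := by
      simp only [hW, Finset.mem_insert, Finset.mem_singleton]
      push_neg
      exact ⟨Ne.symm hxy, hyw⟩
    have hz : l i' ∉ W := by
      simp only [hW, Finset.mem_insert, Finset.mem_singleton]
      push_neg
      exact ⟨hzx, fun e => hwz (e.symm)⟩
    have h1 : q l ≤ ∑ m, if m i ∈ W ∧ m i' ∉ W then q m else 0 := by
      have := Finset.single_le_sum
        (f := fun m => if m i ∈ W ∧ m i' ∉ W then q m else 0)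
        (fun m _ => tnn _ m) (Finset.mem_univ l)
      simpa [hx, hz] using this
    have h2 : q l' ≤ ∑ m, if m i ∉ W ∧ m i' ∈ W then q m else 0 := by
      have := Finset.single_le_sum
        (f := fun m => if m i ∉ W ∧ m i' ∈ W then q m else 0)
        (fun m _ => tnn _ m) (Finset.mem_univ l')
      simpa [hy, hw] using this
    have heq := h W i i'
    have e1 := key W i i'
    have e2 := key' W i i'
    have hlt : (∑ m, if m i ∈ W ∧ m i' ∈ W then q m else 0)
        < min (∑ m, if m i ∈ W then q m else 0)
              (∑ m, if m i' ∈ W then q m else 0) := by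
      rw [lt_min_iff]
      constructor <;> linarith
    rw [heq] at hlt
    exact lt_irrefl _ hlt
end

section
/- Let q be a probability distribution on Eⁿ, E = {1,…,k}. If for every subset W ⊆ E of size at most 2 the indicator family ([Sⁱ ∈ W])ᵢ is pairwise maximally coupled under q, then the same holds for every subset W ⊆ E. (Equivalently: the split representation of a coupling is multimaximally connected iff its 1-2-subsystem is.) -/
open Finset

lemma key_aux (k : ℕ) (p : Fin k → Fin k → ℝ) (f g : Fin k → ℝ)
    (hp : ∀ a b, 0 ≤ p a b)
    (hrow : ∀ a, (∑ b, p a b) = f a)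
    (hcol : ∀ b, (∑ a, p a b) = g b)
    (hdiag : ∀ a, p a a = min (f a) (g a))
    (hpair : ∀ a b, a ≠ b →
      p a a + p a b + (p b a + p b b) = min (f a + f b) (g a + g b))
    (W : Finset (Fin k)) :
    (∑ a ∈ W, ∑ b ∈ W, p a b) = min (∑ a ∈ W, f a) (∑ a ∈ W, g a) := by
  -- row-zero: if f a ≤ g a then the whole row off-diagonal vanishes
  have rowzero : ∀ a, f a ≤ g a → ∀ b, b ≠ a → p a b = 0 := by
    intro a hle b hb
    have h1 := Finset.add_sum_erase Finset.univ (p a) (Finset.mem_univ a)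
    have h2 : p a a = f a := by rw [hdiag]; exact min_eq_left hle
    have h3 := hrow a
    have h4 : ∑ x ∈ Finset.univ.erase a, p a x = 0 := by linarith
    exact (Finset.sum_eq_zero_iff_of_nonneg (fun x _ => hp a x)).mp h4 b
      (Finset.mem_erase.mpr ⟨hb, Finset.mem_univ b⟩)
  have colzero : ∀ b, g b ≤ f b → ∀ a, a ≠ b → p a b = 0 := by
    intro b hle a ha
    have h1 := Finset.add_sum_erase Finset.univ (fun x => p x b) (Finset.mem_univ b)
    have h2 : p b b = g b := by rw [hdiag]; exact min_eq_right hle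
    have h3 := hcol b
    have h4 : ∑ x ∈ Finset.univ.erase b, p x b = 0 := by
      linarith
    exact (Finset.sum_eq_zero_iff_of_nonneg (fun x _ => hp x b)).mp h4 a
      (Finset.mem_erase.mpr ⟨ha, Finset.mem_univ a⟩)
  have offdiag : ∀ a b, g a < f a → f b < g b →
      p a b = min (f a - g a) (g b - f b) := by
    intro a b ha hb
    have hab : a ≠ b := by rintro rfl; linarith
    have hpaa : p a a = g a := by rw [hdiag]; exact min_eq_right ha.le
    have hpbb : p b b = f b := by rw [hdiag]; exact min_eq_left hb.le
    have hpba : p b a = 0 := rowzero b hb.le a hab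
    have hp2 := hpair a b hab
    rcases le_total (f a + f b) (g a + g b) with h | h
    · rw [min_eq_left h] at hp2
      rw [min_eq_left (by linarith : f a - g a ≤ g b - f b)]
      linarith
    · rw [min_eq_right h] at hp2
      rw [min_eq_right (by linarith : g b - f b ≤ f a - g a)]
      linarith
  have hcomm : (∑ a ∈ W, ∑ b ∈ W, p a b) = ∑ b ∈ W, ∑ a ∈ W, p a b :=
    Finset.sum_comm
  have hPF : (∑ a ∈ W, ∑ b ∈ W, p a b) ≤ ∑ a ∈ W, f a := by
    apply Finset.sum_le_sum
    intro a _
    rw [← hrow a]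
    exact Finset.sum_le_sum_of_subset_of_nonneg (Finset.subset_univ W)
      (fun b _ _ => hp a b)
  have hPG : (∑ a ∈ W, ∑ b ∈ W, p a b) ≤ ∑ a ∈ W, g a := by
    rw [hcomm]
    apply Finset.sum_le_sum
    intro b _
    rw [← hcol b]
    exact Finset.sum_le_sum_of_subset_of_nonneg (Finset.subset_univ W)
      (fun a _ _ => hp a b)
  have dich : (∀ a a', g a < f a → g a' < f a' → a = a') ∨
      (∀ b b', f b < g b → f b' < g b' → b = b') := by
    by_contra hcon
    push_neg at hcon
    obtain ⟨⟨a1, a2, ha1', ha2', hne_a⟩, ⟨b1, b2, hb1', hb2', hne_b⟩⟩ := hcon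
    have hab11 : a1 ≠ b1 := by rintro rfl; linarith
    have hab12 : a1 ≠ b2 := by rintro rfl; linarith
    have hab21 : a2 ≠ b1 := by rintro rfl; linarith
    have p11 := offdiag a1 b1 ha1' hb1'
    have p12 := offdiag a1 b2 ha1' hb2'
    have p21 := offdiag a2 b1 ha2' hb1'
    have pos12 : 0 < p a1 b2 := by
      rw [p12]; exact lt_min (by linarith) (by linarith)
    have pos21 : 0 < p a2 b1 := by
      rw [p21]; exact lt_min (by linarith) (by linarith)
    have hrow1 : p a1 a1 + (p a1 b1 + p a1 b2) ≤ f a1 := by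
      rw [← hrow a1]
      have h := Finset.sum_le_sum_of_subset_of_nonneg
        (Finset.subset_univ ({a1, b1, b2} : Finset (Fin k))) (fun x _ _ => hp a1 x)
      rwa [Finset.sum_insert (by simp [hab11, hab12]),
        Finset.sum_insert (by simp [hne_b]), Finset.sum_singleton] at h
    have hcol1 : p b1 b1 + (p a1 b1 + p a2 b1) ≤ g b1 := by
      rw [← hcol b1]
      have h := Finset.sum_le_sum_of_subset_of_nonneg
        (Finset.subset_univ ({b1, a1, a2} : Finset (Fin k))) (fun x _ _ => hp x b1)
      rwa [Finset.sum_insert (by simp [Ne.symm hab11, Ne.symm hab21]),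
        Finset.sum_insert (by simp [hne_a]), Finset.sum_singleton] at h
    have hdiag1 : p a1 a1 = g a1 := by rw [hdiag]; exact min_eq_right ha1'.le
    have hdiagb1 : p b1 b1 = f b1 := by rw [hdiag]; exact min_eq_left hb1'.le
    rcases min_choice (f a1 - g a1) (g b1 - f b1) with h | h
    · rw [h] at p11; linarith
    · rw [h] at p11; linarith
  rcases dich with HA | HB
  · by_cases hex : ∃ a ∈ W, g a < f a
    · obtain ⟨a0, ha0W, ha0⟩ := hex
      have hPg : (∑ a ∈ W, ∑ b ∈ W, p a b) = ∑ b ∈ W, g b := by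
        rw [hcomm]
        refine Finset.sum_congr rfl fun b hb => ?_
        rw [← hcol b]
        apply Finset.sum_subset (Finset.subset_univ W)
        intro a _ haW
        have hfa : f a ≤ g a := by
          by_contra hc
          push_neg at hc
          exact haW (by rw [HA a a0 hc ha0]; exact ha0W)
        exact rowzero a hfa b (fun hba => haW (hba ▸ hb))
      rw [hPg, min_eq_right (hPg ▸ hPF)]
    · push_neg at hex
      have hPf : (∑ a ∈ W, ∑ b ∈ W, p a b) = ∑ a ∈ W, f a := by
        refine Finset.sum_congr rfl fun a ha => ?_
        rw [← hrow a]
        apply Finset.sum_subset (Finset.subset_univ W)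
        intro b _ hbW
        exact rowzero a (hex a ha) b (fun hba => hbW (hba ▸ ha))
      rw [hPf, min_eq_left (hPf ▸ hPG)]
  · by_cases hex : ∃ b ∈ W, f b < g b
    · obtain ⟨b0, hb0W, hb0⟩ := hex
      have hPf : (∑ a ∈ W, ∑ b ∈ W, p a b) = ∑ a ∈ W, f a := by
        refine Finset.sum_congr rfl fun a ha => ?_
        rw [← hrow a]
        apply Finset.sum_subset (Finset.subset_univ W)
        intro b _ hbW
        have hgb : g b ≤ f b := by
          by_contra hc
          push_neg at hc
          exact hbW (by rw [HB b b0 hc hb0]; exact hb0W)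
        exact colzero b hgb a (fun h => hbW (h ▸ ha))
      rw [hPf, min_eq_left (hPf ▸ hPG)]
    · push_neg at hex
      have hPg : (∑ a ∈ W, ∑ b ∈ W, p a b) = ∑ b ∈ W, g b := by
        rw [hcomm]
        refine Finset.sum_congr rfl fun b hb => ?_
        rw [← hcol b]
        apply Finset.sum_subset (Finset.subset_univ W)
        intro a _ haW
        exact colzero b (hex b hb) a (fun h => haW (h ▸ hb))
      rw [hPg, min_eq_right (hPg ▸ hPF)]

theorem stmt_15 (n k : ℕ) (q : (Fin n → Fin k) → ℝ)
    (hq : ∀ l, 0 ≤ q l) (hsum : (∑ l, q l) = 1)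
    (h12 : ∀ W : Finset (Fin k), W.card ≤ 2 → ∀ i i' : Fin n,
        (∑ l, if l i ∈ W ∧ l i' ∈ W then q l else 0)
          = min (∑ l, if l i ∈ W then q l else 0)
                (∑ l, if l i' ∈ W then q l else 0)) :
    ∀ (W : Finset (Fin k)) (i i' : Fin n),
        (∑ l, if l i ∈ W ∧ l i' ∈ W then q l else 0)
          = min (∑ l, if l i ∈ W then q l else 0)
                (∑ l, if l i' ∈ W then q l else 0) := by
  intro W i i'
  set p : Fin k → Fin k → ℝ :=
    fun a b => ∑ l, if l i = a ∧ l i' = b then q l else 0 with hpdef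
  set f : Fin k → ℝ := fun a => ∑ l, if l i = a then q l else 0 with hfdef
  set g : Fin k → ℝ := fun b => ∑ l, if l i' = b then q l else 0 with hgdef
  have hFW : ∀ V : Finset (Fin k),
      (∑ l, if l i ∈ V then q l else 0) = ∑ a ∈ V, f a := by
    intro V
    have h1 : ∀ l, (if l i ∈ V then q l else 0)
        = ∑ a ∈ V, if l i = a then q l else 0 := by
      intro l
      rw [Finset.sum_ite_eq V (l i) fun _ => q l]
    simp only [h1, hfdef]
    exact Finset.sum_comm
  have hGW : ∀ V : Finset (Fin k),
      (∑ l, if l i' ∈ V then q l else 0) = ∑ a ∈ V, g a := by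
    intro V
    have h1 : ∀ l, (if l i' ∈ V then q l else 0)
        = ∑ a ∈ V, if l i' = a then q l else 0 := by
      intro l
      rw [Finset.sum_ite_eq V (l i') fun _ => q l]
    simp only [h1, hgdef]
    exact Finset.sum_comm
  have hPW : ∀ V : Finset (Fin k),
      (∑ l, if l i ∈ V ∧ l i' ∈ V then q l else 0)
        = ∑ a ∈ V, ∑ b ∈ V, p a b := by
    intro V
    have h1 : ∀ l, (if l i ∈ V ∧ l i' ∈ V then q l else 0)
        = ∑ a ∈ V, ∑ b ∈ V, if l i = a ∧ l i' = b then q l else 0 := by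
      intro l
      have h2 : ∀ a, (∑ b ∈ V, if l i = a ∧ l i' = b then q l else 0)
          = if l i = a then (if l i' ∈ V then q l else 0) else 0 := by
        intro a
        by_cases h : l i = a <;>
          simp [h, Finset.sum_ite_eq V (l i') fun _ => q l]
      rw [ite_and, ← Finset.sum_ite_eq V (l i)
        (fun _ => if l i' ∈ V then q l else 0)]
      exact Finset.sum_congr rfl fun a _ => (h2 a).symm
    simp only [h1, hpdef]
    rw [Finset.sum_comm]
    exact Finset.sum_congr rfl fun a _ => Finset.sum_comm
  rw [hPW W, hFW W, hGW W]
  apply key_aux k p f g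
  · intro a b
    exact Finset.sum_nonneg fun l _ => by
      by_cases h : (l i = a ∧ l i' = b) <;> simp [h, hq l]
  · intro a
    have h2 : ∀ l, (∑ b, if l i = a ∧ l i' = b then q l else 0)
        = if l i = a then q l else 0 := by
      intro l
      by_cases h : l i = a <;> simp [h, ite_and,
        Finset.sum_ite_eq Finset.univ (l i') fun _ => q l]
    simp only [hpdef, hfdef]
    rw [Finset.sum_comm]
    simp only [h2]
  · intro b
    have h2 : ∀ l, (∑ a, if l i = a ∧ l i' = b then q l else 0)
        = if l i' = b then q l else 0 := by
      intro l
      by_cases h : l i' = b <;> simp [h, ite_and,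
        Finset.sum_ite_eq Finset.univ (l i) fun _ => q l]
    simp only [hpdef, hgdef]
    rw [Finset.sum_comm]
    simp only [h2]
  · intro a
    have h := h12 {a} (by simp) i i'
    rw [hPW {a}, hFW {a}, hGW {a}] at h
    simpa using h
  · intro a b hab
    have hc : ({a, b} : Finset (Fin k)).card ≤ 2 :=
      le_trans (Finset.card_insert_le _ _) (by simp)
    have h := h12 {a, b} hc i i'
    rw [hPW {a, b}, hFW {a, b}, hGW {a, b}] at h
    simp only [Finset.sum_pair hab] at h
    exact h
end

section
/- Let p₁,…,pₙ be probability mass functions on E = {1,…,k} that are dominance-aligned: there is an index i₀ ∈ E such that for all i ≠ i₀, p₁(i) ≤ p₂(i) ≤ ⋯ ≤ pₙ(i). Then there exists a coupling q on Eⁿ with marginals p₁,…,pₙ such that for every nonempty W ⊆ E \ {i₀}, the indicator family ([Sᶜ ∈ W])_{c=1..n} is pairwise maximally coupled, i.e., for all c < c′, Pr[Sᶜ ∈ W, S^{c′} ∈ W] = min(pᶜ(W), p^{c′}(W)) where pᶜ(W) = Σ_{i∈W} pᶜ(i). -/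
open Finset

namespace Stmt16

variable {m k : ℕ}

/-- value vector: chain c takes value i iff the threshold j is ≤ c. -/
def vv (i₀ i : Fin k) (j : ℕ) : Fin (m+1) → Fin k := fun c => if j ≤ c.1 then i else i₀

/-- cumulative function for telescoping -/
def G (p : Fin (m+1) → Fin k → ℝ) (i : Fin k) (j : ℕ) : ℝ :=
  if h : j = 0 then 0 else p ⟨min (j-1) m, by omega⟩ i

def w (p : Fin (m+1) → Fin k → ℝ) (i : Fin k) (j : ℕ) : ℝ := G p i (j+1) - G p i j

noncomputable def q (p : Fin (m+1) → Fin k → ℝ) (i₀ : Fin k) (l : Fin (m+1) → Fin k) : ℝ :=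
  (if l = (fun _ => i₀) then 1 - ∑ i ∈ univ.erase i₀, p (Fin.last m) i else 0)
  + ∑ i ∈ univ.erase i₀, ∑ j ∈ range (m+1), (if l = vv i₀ i j then w p i j else 0)

lemma G_zero (p : Fin (m+1) → Fin k → ℝ) (i : Fin k) : G p i 0 = 0 := by simp [G]

lemma G_succ (p : Fin (m+1) → Fin k → ℝ) (i : Fin k) (j : ℕ) (hj : j ≤ m) :
    G p i (j+1) = p ⟨j, by omega⟩ i := by
  unfold G
  rw [dif_neg (by omega)]
  congr 1
  exact Fin.ext (by simp; omega)

lemma sum_w (p : Fin (m+1) → Fin k → ℝ) (i : Fin k) (t : ℕ) :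
    ∑ j ∈ range t, w p i j = G p i t := by
  have h := Finset.sum_range_sub (f := G p i) (n := t)
  simpa [w, G_zero] using h

lemma sum_w_le (p : Fin (m+1) → Fin k → ℝ) (i : Fin k) (c : Fin (m+1)) :
    ∑ j ∈ range (m+1), (if j ≤ c.1 then w p i j else 0) = p c i := by
  rw [← Finset.sum_filter]
  have : (range (m+1)).filter (fun j => j ≤ c.1) = range (c.1+1) := by
    ext j; simp; omega
  rw [this, sum_w, G_succ p i c.1 (by omega)]

lemma sum_w_all (p : Fin (m+1) → Fin k → ℝ) (i : Fin k) :
    ∑ j ∈ range (m+1), w p i j = p (Fin.last m) i := by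
  rw [sum_w, G_succ p i m le_rfl]; rfl

lemma sum_w_gt (p : Fin (m+1) → Fin k → ℝ) (i : Fin k) (c : Fin (m+1)) :
    ∑ j ∈ range (m+1), (if ¬ (j ≤ c.1) then w p i j else 0) = p (Fin.last m) i - p c i := by
  have h1 : ∑ j ∈ range (m+1), ((if j ≤ c.1 then w p i j else 0) + (if ¬ (j ≤ c.1) then w p i j else 0)) = ∑ j ∈ range (m+1), w p i j := by
    apply Finset.sum_congr rfl
    intro j _
    by_cases h : j ≤ c.1 <;> simp [h]
  rw [Finset.sum_add_distrib, sum_w_le] at h1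
  have h2 : ∑ j ∈ range (m+1), w p i j = p (Fin.last m) i := by
    rw [sum_w, G_succ p i m le_rfl]; rfl
  linarith [h1, h2]

lemma w_nonneg (p : Fin (m+1) → Fin k → ℝ) (hp0 : ∀ c i, 0 ≤ p c i) (i₀ : Fin k) (i : Fin k)
    (hi : i ≠ i₀) (halign : ∀ i : Fin k, i ≠ i₀ → ∀ c c' : Fin (m+1), c ≤ c' → p c i ≤ p c' i)
    (j : ℕ) : 0 ≤ w p i j := by
  unfold w G
  by_cases h : j = 0
  · subst h; simp [hp0]
  · rw [dif_neg h, dif_neg (by omega)]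
    have := halign i hi ⟨min (j-1) m, by omega⟩ ⟨min (j+1-1) m, by omega⟩ (by simp only [Fin.mk_le_mk]; omega)
    linarith


lemma q_indicator (p : Fin (m+1) → Fin k → ℝ) (i₀ : Fin k)
    (P : (Fin (m+1) → Fin k) → Prop) [DecidablePred P] :
    (∑ l, if P l then q p i₀ l else 0)
      = (if P (fun _ => i₀) then 1 - ∑ i ∈ univ.erase i₀, p (Fin.last m) i else 0)
        + ∑ i ∈ univ.erase i₀, ∑ j ∈ range (m+1), (if P (vv i₀ i j) then w p i j else 0) := by
  have key : ∀ l, (if P l then q p i₀ l else 0)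
      = (if l = (fun _ => i₀) then (if P (fun _ => i₀) then 1 - ∑ i ∈ univ.erase i₀, p (Fin.last m) i else 0) else 0)
        + ∑ i ∈ univ.erase i₀, ∑ j ∈ range (m+1),
            (if l = vv i₀ i j then (if P (vv i₀ i j) then w p i j else 0) else 0) := by
    intro l
    unfold q
    by_cases hP : P l
    · rw [if_pos hP]
      congr 1
      · by_cases hl : l = (fun _ => i₀)
        · subst hl; simp [hP]
        · simp [hl]
      · apply Finset.sum_congr rfl; intro i _
        apply Finset.sum_congr rfl; intro j _
        by_cases hl : l = vv i₀ i j
        · subst hl; simp [hP]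
        · simp [hl]
    · rw [if_neg hP]
      symm
      have h1 : (if l = (fun _ => i₀) then (if P (fun _ => i₀) then 1 - ∑ i ∈ univ.erase i₀, p (Fin.last m) i else 0) else 0) = 0 := by
        by_cases hl : l = (fun _ => i₀)
        · subst hl; simp [hP]
        · simp [hl]
      rw [h1, zero_add]
      apply Finset.sum_eq_zero; intro i _
      apply Finset.sum_eq_zero; intro j _
      by_cases hl : l = vv i₀ i j
      · subst hl; simp [hP]
      · simp [hl]
  rw [Finset.sum_congr rfl (fun l _ => key l), Finset.sum_add_distrib]
  congr 1
  · rw [Finset.sum_ite_eq' univ (fun _ => i₀)]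
    simp
  · rw [Finset.sum_comm]
    apply Finset.sum_congr rfl; intro i _
    rw [Finset.sum_comm]
    apply Finset.sum_congr rfl; intro j _
    rw [Finset.sum_ite_eq' univ (vv i₀ i j)]
    simp

end Stmt16

open Stmt16 in
theorem stmt_16 (n k : ℕ) (p : Fin n → Fin k → ℝ)
    (hp0 : ∀ c i, 0 ≤ p c i) (hp1 : ∀ c, (∑ i, p c i) = 1)
    (i₀ : Fin k)
    (halign : ∀ i : Fin k, i ≠ i₀ → ∀ c c' : Fin n, c ≤ c' → p c i ≤ p c' i) :
    ∃ q : (Fin n → Fin k) → ℝ,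
      (∀ l, 0 ≤ q l) ∧ (∑ l, q l) = 1 ∧
      (∀ (c : Fin n) (v : Fin k), (∑ l, if l c = v then q l else 0) = p c v) ∧
      (∀ W : Finset (Fin k), W.Nonempty → i₀ ∉ W →
        ∀ c c' : Fin n, c < c' →
          (∑ l, if l c ∈ W ∧ l c' ∈ W then q l else 0)
            = min (∑ i ∈ W, p c i) (∑ i ∈ W, p c' i)) := by
  rcases n with _ | m
  · refine ⟨fun _ => 1, fun _ => zero_le_one, ?_, fun c => c.elim0, fun _ _ _ c => c.elim0⟩
    simp
  -- main case
  have hwnn : ∀ i : Fin k, i ≠ i₀ → ∀ j, 0 ≤ w p i j :=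
    fun i hi j => w_nonneg p hp0 i₀ i hi halign j
  have hrnn : 0 ≤ 1 - ∑ i ∈ univ.erase i₀, p (Fin.last m) i := by
    have h1 : ∑ i ∈ univ.erase i₀, p (Fin.last m) i ≤ ∑ i, p (Fin.last m) i :=
      Finset.sum_le_sum_of_subset_of_nonneg (Finset.erase_subset _ _)
        (fun i _ _ => hp0 _ i)
    rw [hp1] at h1; linarith
  refine ⟨q p i₀, ?_, ?_, ?_, ?_⟩
  · intro l
    unfold q
    apply add_nonneg
    · split_ifs
      exacts [hrnn, le_rfl]
    · apply Finset.sum_nonneg; intro i hi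
      apply Finset.sum_nonneg; intro j _
      have hi' : i ≠ i₀ := (Finset.mem_erase.mp hi).1
      split_ifs <;> simp [hwnn i hi' j]
  · have h := q_indicator p i₀ (fun _ => True)
    simp only [if_true] at h
    rw [h]
    have h2 : ∀ i ∈ univ.erase i₀, ∑ j ∈ range (m+1), w p i j = p (Fin.last m) i :=
      fun i _ => sum_w_all p i
    rw [Finset.sum_congr rfl h2]
    ring
  · intro c v
    rw [q_indicator p i₀ (fun l => l c = v)]
    by_cases hv : v = i₀
    · subst hv
      rw [if_pos rfl]
      have h2 : ∀ i ∈ univ.erase v,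
          (∑ j ∈ range (m+1), if vv v i j c = v then w p i j else 0)
            = p (Fin.last m) i - p c i := by
        intro i hi
        have hi' : i ≠ v := (Finset.mem_erase.mp hi).1
        rw [← sum_w_gt p i c]
        apply Finset.sum_congr rfl; intro j _
        by_cases hj : j ≤ c.1 <;> simp [vv, hj, hi']
      rw [Finset.sum_congr rfl h2, Finset.sum_sub_distrib]
      have h3 := hp1 c
      rw [← Finset.add_sum_erase univ (p c) (Finset.mem_univ v)] at h3
      linarith
    · rw [if_neg (by simpa using Ne.symm hv)]
      have h2 : ∀ i ∈ univ.erase i₀,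
          (∑ j ∈ range (m+1), if vv i₀ i j c = v then w p i j else 0)
            = if i = v then p c i else 0 := by
        intro i hi
        by_cases hiv : i = v
        · subst hiv
          rw [if_pos rfl, ← sum_w_le p i c]
          apply Finset.sum_congr rfl; intro j _
          by_cases hj : j ≤ c.1 <;> simp [vv, hj, Ne.symm hv]
        · rw [if_neg hiv]
          apply Finset.sum_eq_zero; intro j _
          by_cases hj : j ≤ c.1 <;> simp [vv, hj, hiv, Ne.symm hv]
      rw [Finset.sum_congr rfl h2, Finset.sum_ite_eq' (univ.erase i₀) v]
      rw [if_pos (Finset.mem_erase.mpr ⟨hv, Finset.mem_univ v⟩)]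
      ring
  · intro W hWne hWi₀ c c' hcc
    rw [q_indicator p i₀ (fun l => l c ∈ W ∧ l c' ∈ W)]
    rw [if_neg (by simp [hWi₀])]
    have hle : c.1 ≤ c'.1 := le_of_lt hcc
    have h2 : ∀ i ∈ univ.erase i₀,
        (∑ j ∈ range (m+1), if vv i₀ i j c ∈ W ∧ vv i₀ i j c' ∈ W then w p i j else 0)
          = if i ∈ W then p c i else 0 := by
      intro i hi
      by_cases hiW : i ∈ W
      · rw [if_pos hiW, ← sum_w_le p i c]
        apply Finset.sum_congr rfl; intro j _
        by_cases hj : j ≤ c.1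
        · simp [vv, hj, show j ≤ c'.1 by omega, hiW]
        · by_cases hj' : j ≤ c'.1 <;> simp [vv, hj, hj', hWi₀]
      · rw [if_neg hiW]
        apply Finset.sum_eq_zero; intro j _
        by_cases hj : j ≤ c.1
        · simp [vv, hj, show j ≤ c'.1 by omega, hiW]
        · by_cases hj' : j ≤ c'.1 <;> simp [vv, hj, hj', hWi₀, hiW]
    rw [Finset.sum_congr rfl h2, ← Finset.sum_filter]
    have hW : (univ.erase i₀).filter (fun i => i ∈ W) = W := by
      ext i
      simp only [Finset.mem_filter, Finset.mem_erase, Finset.mem_univ, and_true, true_and]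
      constructor
      · exact fun h => h.2
      · intro h; exact ⟨fun he => hWi₀ (he ▸ h), h⟩
    rw [hW, zero_add]
    symm
    apply min_eq_left
    apply Finset.sum_le_sum
    intro i hiW
    exact halign i (fun he => hWi₀ (he ▸ hiW)) c c' (le_of_lt hcc)
end
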